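/- There exists a finite constant C₀, depending only on h, such that for all β ≥ C₀ and all L ≥ 2(n₀+2): every function f : V₋₁ → [0,1] with f ≡ 1 on Rᵃ and f(-1) = 0 satisfies D_V(f) ≥ C₀^{−1}·|Λ_L|·e^{−βΓ_c}, where D_V(f) = (1/2) Σ min(e^{−βℍ(σ)}, e^{−βℍ(σ')}) (f(σ') − f(σ))², the sum running over all ordered pairs (σ,σ') of configurations in V₋₁ differing at exactly one site. Equivalently, the variationally defined capacity Cap_V(Rᵃ, {-1}) of the chain reflected in V₋₁ is at least |Λ_L|·e^{−βΓ_c}/C₀. -/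

import Mathlib

/-!
For each anchor `a` of the torus, grow a droplet of `0`-spins out of `-1` one flip at a time:
an `(n₀+1) × n₀` rectangle column by column, then a protuberance on top of its first column,
which lands in `Rᵃ` after `K = n₀(n₀+1)+1` flips. Relative to `-1`, the energy of such a droplet
is its perimeter minus `h` times its area; every completed column raises it by `2 - h n₀ ≥ 0`, so
nothing along the path exceeds the final value `Γ_c`. The paths stay in `V₋₁` and, since a
droplet determines its anchor, the `L²` paths are edge-disjoint. By Cauchy–Schwarz, `f` climbing
from `0` to `1` in `K` steps costs at least `e^{-βΓ_c}/K` on each path, hence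
`D_V(f) ≥ L² e^{-βΓ_c} / (2K)`.
-/

open Classical Finset Filter Topology

noncomputable section

namespace BC

/-- Sites of the two-dimensional discrete torus of side `L`. -/
abbrev Site (L : ℕ) := ZMod L × ZMod L

/-- Spin configurations: a spin `s : Fin 3` at a site encodes the value `s - 1 ∈ {-1,0,1}`. -/
abbrev Cfg (L : ℕ) := Site L → Fin 3

/-- The spin value in `{-1, 0, 1}` encoded by an element of `Fin 3`. -/
def sval (s : Fin 3) : ℤ := (s : ℤ) - 1

/-- The critical length `n₀ = ⌊2/h⌋`. -/
def n0 (h : ℝ) : ℕ := ⌊(2 : ℝ) / h⌋₊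

/-- The configuration `-1` with all spins equal to `-1`. -/
def cminus (L : ℕ) : Cfg L := fun _ => 0

/-- The configuration `0` with all spins equal to `0`. -/
def czero (L : ℕ) : Cfg L := fun _ => 1

/-- The configuration `+1` with all spins equal to `+1`. -/
def cplus (L : ℕ) : Cfg L := fun _ => 2

/-- Nearest-neighbour relation on the torus. -/
def nbr (L : ℕ) (x y : Site L) : Prop :=
  y = x + (1, 0) ∨ y = x - (1, 0) ∨ y = x + (0, 1) ∨ y = x - (0, 1)

/-- The four nearest neighbours of a site, as a finite set. -/
def nbrFinset (L : ℕ) (x : Site L) : Finset (Site L) :=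
  {x + (1, 0), x - (1, 0), x + (0, 1), x - (0, 1)}

/-- The torus viewed as a simple graph with nearest-neighbour adjacency. -/
def torusGraph (L : ℕ) : SimpleGraph (Site L) where
  Adj x y := x ≠ y ∧ nbr L x y
  symm := by
    constructor
    rintro x y ⟨hne, hn⟩
    refine ⟨hne.symm, ?_⟩
    unfold nbr at hn ⊢
    rcases hn with h1 | h1 | h1 | h1 <;> subst h1 <;> simp
  loopless := ⟨by rintro x ⟨hne, -⟩; exact hne rfl⟩

/-- The `s × t` rectangle of sites with lower-left corner `a`. -/
def rect (L : ℕ) (a : Site L) (s t : ℕ) : Finset (Site L) :=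
  (Finset.range s ×ˢ Finset.range t).image
    (fun p => (a.1 + (p.1 : ZMod L), a.2 + (p.2 : ZMod L)))

/-- The four corners of the `s × t` rectangle with lower-left corner `a`. -/
def corners (L : ℕ) (a : Site L) (s t : ℕ) : Finset (Site L) :=
  {(a.1, a.2), (a.1 + ((s - 1 : ℕ) : ZMod L), a.2),
   (a.1, a.2 + ((t - 1 : ℕ) : ZMod L)),
   (a.1 + ((s - 1 : ℕ) : ZMod L), a.2 + ((t - 1 : ℕ) : ZMod L))}

/-- `S` is an `n × (n+1)` rectangle (in either orientation). -/
def isCritRect (L n : ℕ) (S : Finset (Site L)) : Prop :=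
  ∃ a : Site L, S = rect L a n (n + 1) ∨ S = rect L a (n + 1) n

/-- `S` is an `n × (n+1)` rectangle plus an extra site attached to a longest side. -/
def critRl (L n : ℕ) (S : Finset (Site L)) : Prop :=
  ∃ (a : Site L) (i : ℕ), i ≤ n ∧
    (S = insert (a.1 + (i : ZMod L), a.2 - 1) (rect L a (n + 1) n) ∨
     S = insert (a.1 + (i : ZMod L), a.2 + (n : ZMod L)) (rect L a (n + 1) n) ∨
     S = insert (a.1 - 1, a.2 + (i : ZMod L)) (rect L a n (n + 1)) ∨
     S = insert (a.1 + (n : ZMod L), a.2 + (i : ZMod L)) (rect L a n (n + 1)))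

/-- `S` is an `n × (n+1)` rectangle plus an extra site attached to a longest side,
next to a corner of the rectangle. -/
def critRlc (L n : ℕ) (S : Finset (Site L)) : Prop :=
  ∃ (a : Site L) (i : ℕ), i ≤ n ∧ (i = 0 ∨ i = n) ∧
    (S = insert (a.1 + (i : ZMod L), a.2 - 1) (rect L a (n + 1) n) ∨
     S = insert (a.1 + (i : ZMod L), a.2 + (n : ZMod L)) (rect L a (n + 1) n) ∨
     S = insert (a.1 - 1, a.2 + (i : ZMod L)) (rect L a n (n + 1)) ∨
     S = insert (a.1 + (n : ZMod L), a.2 + (i : ZMod L)) (rect L a n (n + 1)))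

/-- `S` is an `n × (n+1)` rectangle plus an extra site attached to a longest side,
away from the corners of the rectangle. -/
def critRli (L n : ℕ) (S : Finset (Site L)) : Prop :=
  ∃ (a : Site L) (i : ℕ), 0 < i ∧ i < n ∧
    (S = insert (a.1 + (i : ZMod L), a.2 - 1) (rect L a (n + 1) n) ∨
     S = insert (a.1 + (i : ZMod L), a.2 + (n : ZMod L)) (rect L a (n + 1) n) ∨
     S = insert (a.1 - 1, a.2 + (i : ZMod L)) (rect L a n (n + 1)) ∨
     S = insert (a.1 + (n : ZMod L), a.2 + (i : ZMod L)) (rect L a n (n + 1)))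

/-- `S` is an `n × (n+1)` rectangle plus an extra site attached to a shortest side. -/
def critRs (L n : ℕ) (S : Finset (Site L)) : Prop :=
  ∃ (a : Site L) (j : ℕ), j < n ∧
    (S = insert (a.1 - 1, a.2 + (j : ZMod L)) (rect L a (n + 1) n) ∨
     S = insert (a.1 + ((n + 1 : ℕ) : ZMod L), a.2 + (j : ZMod L)) (rect L a (n + 1) n) ∨
     S = insert (a.1 + (j : ZMod L), a.2 - 1) (rect L a n (n + 1)) ∨
     S = insert (a.1 + (j : ZMod L), a.2 + ((n + 1 : ℕ) : ZMod L)) (rect L a n (n + 1)))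

/-- `S` is an `n × (n+1)` rectangle plus two mutually adjacent extra sites, each attached
to a longest side. -/
def critRl2 (L n : ℕ) (S : Finset (Site L)) : Prop :=
  ∃ (a : Site L) (i : ℕ), i + 1 ≤ n ∧
    (S = rect L a (n + 1) n ∪
        {(a.1 + (i : ZMod L), a.2 - 1), (a.1 + (i : ZMod L) + 1, a.2 - 1)} ∨
     S = rect L a (n + 1) n ∪
        {(a.1 + (i : ZMod L), a.2 + (n : ZMod L)), (a.1 + (i : ZMod L) + 1, a.2 + (n : ZMod L))} ∨
     S = rect L a n (n + 1) ∪
        {(a.1 - 1, a.2 + (i : ZMod L)), (a.1 - 1, a.2 + (i : ZMod L) + 1)} ∨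
     S = rect L a n (n + 1) ∪
        {(a.1 + (n : ZMod L), a.2 + (i : ZMod L)), (a.1 + (n : ZMod L), a.2 + (i : ZMod L) + 1)})

section

variable (L : ℕ) [NeZero L]

/-- The Blume-Capel Hamiltonian with zero chemical potential and magnetic field `h`. -/
def ham (h : ℝ) (σ : Cfg L) : ℝ :=
  (∑ x : Site L,
     (((sval (σ (x + (1, 0))) : ℝ) - (sval (σ x) : ℝ)) ^ 2 +
      ((sval (σ (x + (0, 1))) : ℝ) - (sval (σ x) : ℝ)) ^ 2)) -
  h * ∑ x : Site L, (sval (σ x) : ℝ)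

/-- The set `A(σ)` of sites where the spin differs from `-1`. -/
def Asites (σ : Cfg L) : Finset (Site L) := univ.filter fun x => σ x ≠ 0

/-- `N(σ)`, the number of spins different from `-1`. -/
def Nsz (σ : Cfg L) : ℕ := (Asites L σ).card

/-- The set of sites where the spin differs from `0`. -/
def A0sites (σ : Cfg L) : Finset (Site L) := univ.filter fun x => σ x ≠ 1

/-- `σ^{x,+}` : flip the spin at `x` by `+1 mod 3`. -/
def flipUp (σ : Cfg L) (x : Site L) : Cfg L := Function.update σ x (σ x + 1)

/-- `σ^{x,-}` : flip the spin at `x` by `-1 mod 3`. -/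
def flipDown (σ : Cfg L) (x : Site L) : Cfg L := Function.update σ x (σ x - 1)

/-- Metropolis jump rate. -/
def rate (h β : ℝ) (σ τ : Cfg L) : ℝ := Real.exp (-β * max (ham L h τ - ham L h σ) 0)

/-- Holding rate `λ_β`. -/
def lam (h β : ℝ) (σ : Cfg L) : ℝ :=
  ∑ x : Site L, (rate L h β σ (flipUp L σ x) + rate L h β σ (flipDown L σ x))

/-- One-step average of `u` under the jump probabilities `p_β = R_β/λ_β`. -/
def avg (h β : ℝ) (u : Cfg L → ℝ) (σ : Cfg L) : ℝ :=
  (∑ x : Site L,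
     (rate L h β σ (flipUp L σ x) * u (flipUp L σ x) +
      rate L h β σ (flipDown L σ x) * u (flipDown L σ x))) / lam L h β σ

/-- `u` is harmonic (w.r.t. the jump probabilities `p_β`) on `D`. -/
def harmOn (h β : ℝ) (u : Cfg L → ℝ) (D : Set (Cfg L)) : Prop :=
  ∀ η ∈ D, u η = avg L h β u η

/-- Unnormalised Gibbs weight `e^{-β ℍ(σ)}`. -/
def gw (h β : ℝ) (σ : Cfg L) : ℝ := Real.exp (-β * ham L h σ)

/-- Two configurations differ at exactly one site. -/
def oneDiff (σ τ : Cfg L) : Prop := (univ.filter fun x => σ x ≠ τ x).card = 1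

/-- Dirichlet form of the chain reflected in `V`. -/
def dirV (h β : ℝ) (V : Set (Cfg L)) (f : Cfg L → ℝ) : ℝ :=
  (1 / 2) * ∑ σ : Cfg L, ∑ τ : Cfg L,
    if σ ∈ V ∧ τ ∈ V ∧ oneDiff L σ τ
    then min (gw L h β σ) (gw L h β τ) * (f τ - f σ) ^ 2 else 0

/-- Capacity (via the Dirichlet principle) for the chain reflected in `V`. -/
def capV (h β : ℝ) (V A B : Set (Cfg L)) : ℝ :=
  sInf { e : ℝ | ∃ f : Cfg L → ℝ, (∀ σ, 0 ≤ f σ ∧ f σ ≤ 1) ∧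
        (∀ σ ∈ A, f σ = 1) ∧ (∀ σ ∈ B, f σ = 0) ∧ e = dirV L h β V f }

/-- Dirichlet form of the full chain. -/
def dirForm (h β : ℝ) (f : Cfg L → ℝ) : ℝ :=
  (1 / 2) * ∑ σ : Cfg L, ∑ x : Site L,
    (min (gw L h β σ) (gw L h β (flipUp L σ x)) * (f (flipUp L σ x) - f σ) ^ 2 +
     min (gw L h β σ) (gw L h β (flipDown L σ x)) * (f (flipDown L σ x) - f σ) ^ 2)

/-- Capacity via the Dirichlet variational principle. -/
def capa (h β : ℝ) (A B : Set (Cfg L)) : ℝ :=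
  sInf { e : ℝ | ∃ f : Cfg L → ℝ, (∀ σ, 0 ≤ f σ ∧ f σ ≤ 1) ∧
        (∀ σ ∈ A, f σ = 1) ∧ (∀ σ ∈ B, f σ = 0) ∧ e = dirForm L h β f }

/-- Holding rate of the chain reflected in `V`. -/
def lamV (h β : ℝ) (V : Set (Cfg L)) (σ : Cfg L) : ℝ :=
  ∑ x : Site L,
    ((if flipUp L σ x ∈ V then rate L h β σ (flipUp L σ x) else 0) +
     (if flipDown L σ x ∈ V then rate L h β σ (flipDown L σ x) else 0))

/-- One-step average for the chain reflected in `V`. -/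
def avgV (h β : ℝ) (V : Set (Cfg L)) (u : Cfg L → ℝ) (σ : Cfg L) : ℝ :=
  (∑ x : Site L,
    ((if flipUp L σ x ∈ V then rate L h β σ (flipUp L σ x) * u (flipUp L σ x) else 0) +
     (if flipDown L σ x ∈ V then rate L h β σ (flipDown L σ x) * u (flipDown L σ x) else 0))) /
  lamV L h β V σ

/-- `R` : `0`-spins forming an `n × (n+1)` rectangle in a sea of `-1`-spins. -/
def setR (n : ℕ) : Set (Cfg L) :=
  {σ | (∀ x, σ x ≠ 2) ∧ isCritRect L n (Asites L σ)}

/-- `B` : configurations with exactly `n(n+1)` spins different from `-1`. -/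
def setB (n : ℕ) : Set (Cfg L) := {σ | Nsz L σ = n * (n + 1)}

/-- `R⁺` : an `n × (n+1)` rectangle of `0`-spins plus one extra spin (`0` or `+1`)
outside the rectangle, in a sea of `-1`-spins. -/
def setRplus (n : ℕ) : Set (Cfg L) :=
  {σ | ∃ (S : Finset (Site L)) (z : Site L), isCritRect L n S ∧ z ∉ S ∧
       Asites L σ = insert z S ∧ ∀ x ∈ S, σ x = 1}

/-- `Rᵃ` : an `n × (n+1)` rectangle of `0`-spins plus one extra `0`-spin attached to the
rectangle, in a sea of `-1`-spins. -/
def setRa (n : ℕ) : Set (Cfg L) :=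
  {σ | ∃ (S : Finset (Site L)) (z : Site L), isCritRect L n S ∧ z ∉ S ∧
       Asites L σ = insert z S ∧ (∀ x ∈ S, σ x = 1) ∧ σ z = 1 ∧ ∃ y ∈ S, nbr L z y}

/-- The valley `V₋₁` of the configuration `-1`. -/
def valleyM (n : ℕ) : Set (Cfg L) := {σ | Nsz L σ ≤ n * (n + 1)} ∪ setRplus L n

/-- `B⁺`, the boundary of the valley of `-1`. -/
def setBplus (n : ℕ) : Set (Cfg L) := (setB L n \ setR L n) ∪ setRplus L n

/-- `Rˡ` : critical droplet with the protuberance attached to a longest side. -/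
def setRl (n : ℕ) : Set (Cfg L) :=
  {σ | (∀ x, σ x ≠ 2) ∧ critRl L n (Asites L σ) ∧ Nsz L σ = n * (n + 1) + 1}

/-- `Rˡᶜ` : protuberance attached to a longest side next to a corner. -/
def setRlc (n : ℕ) : Set (Cfg L) :=
  {σ | (∀ x, σ x ≠ 2) ∧ critRlc L n (Asites L σ) ∧ Nsz L σ = n * (n + 1) + 1}

/-- `Rˡⁱ` : protuberance attached to a longest side away from the corners. -/
def setRli (n : ℕ) : Set (Cfg L) :=
  {σ | (∀ x, σ x ≠ 2) ∧ critRli L n (Asites L σ) ∧ Nsz L σ = n * (n + 1) + 1}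

/-- `Rˢ` : protuberance attached to a shortest side. -/
def setRs (n : ℕ) : Set (Cfg L) :=
  {σ | (∀ x, σ x ≠ 2) ∧ critRs L n (Asites L σ) ∧ Nsz L σ = n * (n + 1) + 1}

/-- `Rˡ₀` : critical droplet of `+1`-spins in a sea of `0`-spins, protuberance on a
longest side. -/
def setRl0 (n : ℕ) : Set (Cfg L) :=
  {σ | (∀ x, σ x ≠ 0) ∧ critRl L n (A0sites L σ) ∧ (A0sites L σ).card = n * (n + 1) + 1}

/-- The energy `Γ_c` of a critical droplet. -/
def GammaC (h : ℝ) : ℝ :=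
  4 * ((n0 h : ℝ) + 1) - h * (((n0 h * (n0 h + 1) + 1 : ℕ) : ℝ) - (L : ℝ) ^ 2)

/-- `δ₁(β) = e^{-hβ} + |Λ|^{1/2} e^{-(2-h)β} + |Λ| e^{-(4-h)β}`. -/
def delta1 (h β : ℝ) : ℝ :=
  Real.exp (-h * β) + (L : ℝ) * Real.exp (-(2 - h) * β) +
    (L : ℝ) ^ 2 * Real.exp (-(4 - h) * β)

/-- `δ₅(β) = e^{-[(n₀+1)h-2]β} + e^{-hβ} + |Λ|^{3/2} e^{-(2-h)β}`. -/
def delta5 (h β : ℝ) : ℝ :=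
  Real.exp (-(((n0 h : ℝ) + 1) * h - 2) * β) + Real.exp (-h * β) +
    (L : ℝ) ^ 3 * Real.exp (-(2 - h) * β)

/-- `δ(β) = |Λ|^{1/2} e^{-[(n₀+1)h-2]β} + |Λ|^{1/2} e^{-hβ} + |Λ|² e^{-(2-h)β}`. -/
def deltaP (h β : ℝ) : ℝ :=
  (L : ℝ) * Real.exp (-(((n0 h : ℝ) + 1) * h - 2) * β) + (L : ℝ) * Real.exp (-h * β) +
    (L : ℝ) ^ 4 * Real.exp (-(2 - h) * β)

end

end BC

lemma sq_sub_le_mul_sum_sq_sub (u : ℕ → ℝ) (K : ℕ) :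
    (u K - u 0) ^ 2 ≤ K * ∑ i ∈ range K, (u (i + 1) - u i) ^ 2 := by
  rw [← sum_range_sub]
  simpa using sq_sum_le_card_mul_sum_sq (s := range K) (f := fun i => u (i + 1) - u i)

namespace BC

section Paths

variable {L : ℕ} [NeZero L]

/-- Cauchy–Schwarz bounds the energy of `f` along each path from below; edge-disjointness lets
these bounds add up inside the Dirichlet form. -/
lemma card_mul_le_dirV_of_paths {ι : Type*} [Fintype ι] {h β w : ℝ} {V : Set (Cfg L)}
    {f : Cfg L → ℝ} {K : ℕ} (γ : ι → ℕ → Cfg L) (hw : 0 ≤ w)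
    (hV : ∀ a, ∀ i ≤ K, γ a i ∈ V)
    (hadj : ∀ a, ∀ i < K, oneDiff L (γ a i) (γ a (i + 1)))
    (hgw : ∀ a, ∀ i ≤ K, w ≤ gw L h β (γ a i))
    (hdisj : Set.InjOn (fun q : ι × ℕ => (γ q.1 q.2, γ q.1 (q.2 + 1)))
      (univ ×ˢ range K : Finset (ι × ℕ)))
    (hstart : ∀ a, f (γ a 0) = 0) (hend : ∀ a, f (γ a K) = 1) :
    Fintype.card ι * w ≤ 2 * K * dirV L h β V f := by
  set G : Cfg L × Cfg L → ℝ := fun p => if p.1 ∈ V ∧ p.2 ∈ V ∧ oneDiff L p.1 p.2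
      then min (gw L h β p.1) (gw L h β p.2) * (f p.2 - f p.1) ^ 2 else 0
  have hG : ∀ p, 0 ≤ G p := fun p => by
    unfold G; split_ifs
    · exact mul_nonneg (le_min (Real.exp_pos _).le (Real.exp_pos _).le) (sq_nonneg _)
    · exact le_rfl
  have hedge : ∀ a, ∀ i < K,
      w * (f (γ a (i + 1)) - f (γ a i)) ^ 2 ≤ G (γ a i, γ a (i + 1)) := by
    intro a i hi
    have hin : γ a i ∈ V ∧ γ a (i + 1) ∈ V ∧ oneDiff L (γ a i) (γ a (i + 1)) :=
      ⟨hV a i hi.le, hV a (i + 1) hi, hadj a i hi⟩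
    simp only [G, if_pos hin]
    exact mul_le_mul_of_nonneg_right (le_min (hgw a i hi.le) (hgw a (i + 1) hi)) (sq_nonneg _)
  have hpath : ∀ a, 1 ≤ K * ∑ i ∈ range K, (f (γ a (i + 1)) - f (γ a i)) ^ 2 := by
    intro a
    simpa [hstart, hend] using sq_sub_le_mul_sum_sq_sub (fun i => f (γ a i)) K
  calc Fintype.card ι * w
      = ∑ a : ι, w * 1 := by simp [mul_comm]
    _ ≤ ∑ a : ι, w * (K * ∑ i ∈ range K, (f (γ a (i + 1)) - f (γ a i)) ^ 2) :=
        sum_le_sum fun a _ => mul_le_mul_of_nonneg_left (hpath a) hw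
    _ = K * ∑ q ∈ univ ×ˢ range K, w * (f (γ q.1 (q.2 + 1)) - f (γ q.1 q.2)) ^ 2 := by
        rw [sum_product, mul_sum]
        refine sum_congr rfl fun a _ => ?_
        rw [mul_sum, mul_sum, mul_sum]
        exact sum_congr rfl fun i _ => by ring
    _ ≤ K * ∑ q ∈ univ ×ˢ range K, G (γ q.1 q.2, γ q.1 (q.2 + 1)) := by
        gcongr with q hq
        exact hedge q.1 q.2 (mem_range.mp (mem_product.mp hq).2)
    _ = K * ∑ p ∈ (univ ×ˢ range K).image fun q : ι × ℕ => (γ q.1 q.2, γ q.1 (q.2 + 1)),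
          G p := by
        rw [sum_image hdisj]
    _ ≤ K * ∑ p, G p := by
        gcongr
        · exact fun p _ _ => hG p
        · exact subset_univ _
    _ = 2 * K * dirV L h β V f := by
        rw [dirV, ← Fintype.sum_prod_type' fun σ τ => G (σ, τ)]; ring

end Paths

section ZeroDroplets

open Function

lemma sum_sq_shift_update {G : Type*} [AddGroup G] [Fintype G] [DecidableEq G] (φ : G → ℝ)
    {e : G} (he : e ≠ 0) (x : G) (c : ℝ) :
    ∑ y, (update φ x c (y + e) - update φ x c y) ^ 2
      = ∑ y, (φ (y + e) - φ y) ^ 2 + ((φ (x + e) - c) ^ 2 - (φ (x + e) - φ x) ^ 2)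
          + ((c - φ (x - e)) ^ 2 - (φ x - φ (x - e)) ^ 2) := by
  have hxe : x + e ≠ x := by simpa using he
  have hex : x - e ≠ x := by simpa using he
  rw [add_assoc, ← sub_eq_iff_eq_add', ← sum_sub_distrib,
    Fintype.sum_eq_add x (x - e) hex.symm]
  · simp [update_of_ne hxe, update_of_ne hex]
  · rintro y ⟨hyx, hye⟩
    have hye' : y + e ≠ x := fun hy => hye (eq_sub_of_add_eq hy)
    simp [update_of_ne hyx, update_of_ne hye']

variable {L : ℕ}

def zerosOn (S : Finset (Site L)) : Cfg L := fun x => if x ∈ S then 1 else 0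

lemma zerosOn_insert (x : Site L) (S : Finset (Site L)) :
    zerosOn (insert x S) = update (zerosOn S) x 1 := by
  ext y : 1
  by_cases hy : y = x
  · subst hy; simp [zerosOn]
  · simp [zerosOn, hy]

variable [NeZero L]

lemma ham_update_of_eq_zero (hL : 1 < L) (h : ℝ) {σ : Cfg L} {x : Site L} (hx : σ x = 0) :
    ham L h (update σ x 1) = ham L h σ - 4 - h
      - 2 * (sval (σ (x + (1, 0))) + sval (σ (x - (1, 0)))
          + sval (σ (x + (0, 1))) + sval (σ (x - (0, 1))) : ℝ) := by
  have : Fact (1 < L) := ⟨hL⟩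
  set φ : Site L → ℝ := fun y => (sval (σ y) : ℝ)
  have hφ : ∀ y, (sval (update σ x 1 y) : ℝ) = update φ x 0 y := fun y => by
    by_cases hy : y = x
    · subst hy; simp [sval]
    · simp [hy, φ]
  have hφx : φ x = -1 := by simp [φ, hx, sval]
  have hham : ∀ ψ : Cfg L, ham L h ψ
      = ∑ y, ((sval (ψ (y + (1, 0))) : ℝ) - sval (ψ y)) ^ 2
        + ∑ y, ((sval (ψ (y + (0, 1))) : ℝ) - sval (ψ y)) ^ 2
        - h * ∑ y, (sval (ψ y) : ℝ) :=
    fun ψ => by rw [ham, sum_add_distrib]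
  have hmag : ∑ y, update φ x 0 y = ∑ y, φ y + 1 := by
    rw [sum_update_of_mem (mem_univ x), ← add_sum_erase _ _ (mem_univ x),
      sdiff_singleton_eq_erase, hφx]
    ring
  simp only [hham, hφ, show ∀ y, (sval (σ y) : ℝ) = φ y from fun _ => rfl]
  rw [sum_sq_shift_update φ (by simp) x, sum_sq_shift_update φ (by simp) x, hmag, hφx]
  ring

lemma ham_cminus (h : ℝ) : ham L h (cminus L) = h * L ^ 2 := by
  simp [ham, cminus, sval, Fintype.card_prod, ZMod.card, sq]

lemma Asites_zerosOn (S : Finset (Site L)) : Asites L (zerosOn S) = S := by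
  ext y; by_cases hy : y ∈ S <;> simp [Asites, zerosOn, hy]

lemma oneDiff_zerosOn_insert {x : Site L} {S : Finset (Site L)} (hx : x ∉ S) :
    oneDiff L (zerosOn S) (zerosOn (insert x S)) := by
  have : (univ.filter fun y => zerosOn S y ≠ zerosOn (insert x S) y) = {x} := by
    ext y; by_cases hy : y = x
    · subst hy; simp [zerosOn, hx]
    · simp [zerosOn, hy]
  rw [oneDiff, this, card_singleton]

lemma ham_zerosOn_insert_le (hL : 1 < L) (h : ℝ) {x : Site L} {S : Finset (Site L)}
    (hx : x ∉ S) :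
    ham L h (zerosOn (insert x S)) ≤ ham L h (zerosOn S) + 4 - h
      - 2 * ((if x - (1, 0) ∈ S then 1 else 0) + (if x - (0, 1) ∈ S then 1 else 0)) := by
  have hsval : ∀ y, (sval (zerosOn S y) : ℝ) = if y ∈ S then 0 else -1 := fun y => by
    by_cases hy : y ∈ S <;> simp [zerosOn, sval, hy]
  rw [zerosOn_insert, ham_update_of_eq_zero hL h (by simp [zerosOn, hx])]
  simp only [hsval]
  split_ifs <;> linarith

end ZeroDroplets

section Growth

variable {L : ℕ}

/-- Growth order of the critical droplet in lattice coordinates: the `n(n+1)` sites of an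
`(n+1) × n` rectangle column by column, then the protuberance `(0, n)` on top of column `0`. -/
def growthSite (n k : ℕ) : ℕ × ℕ := if k < n * (n + 1) then (k / n, k % n) else (0, n)

def place (a : Site L) (p : ℕ × ℕ) : Site L := (a.1 + p.1, a.2 + p.2)

def growthDroplet (a : Site L) (n i : ℕ) : Finset (Site L) :=
  (range i).image fun k => place a (growthSite n k)

def growthPath (a : Site L) (n i : ℕ) : Cfg L := zerosOn (growthDroplet a n i)

variable {n : ℕ}

lemma growthSite_mul_add {c j : ℕ} (hc : c ≤ n) (hj : j < n) :
    growthSite n (c * n + j) = (c, j) := by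
  have hlt : c * n + j < n * (n + 1) := by nlinarith
  rw [growthSite, if_pos hlt, add_comm, Nat.add_mul_div_right _ _ (by omega),
    Nat.div_eq_of_lt hj, Nat.add_mul_mod_self_right, Nat.mod_eq_of_lt hj, zero_add]

lemma growthSite_top : growthSite n (n * (n + 1)) = (0, n) := by
  simp [growthSite]

lemma growthSite_of_lt {k : ℕ} (hk : k < n * (n + 1)) :
    growthSite n k = (k / n, k % n) ∧ k / n ≤ n ∧ k % n < n := by
  have hn : 0 < n := by rcases n with _ | n <;> simp_all
  have := (Nat.div_lt_iff_lt_mul hn).mpr (show k < (n + 1) * n by linarith)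
  exact ⟨if_pos hk, by omega, Nat.mod_lt _ hn⟩

lemma growthSite_le {k : ℕ} (hk : k ≤ n * (n + 1)) :
    (growthSite n k).1 ≤ n ∧ (growthSite n k).2 ≤ n := by
  rcases hk.lt_or_eq with hk | rfl
  · obtain ⟨hs, h1, h2⟩ := growthSite_of_lt hk
    rw [hs]; omega
  · simp [growthSite_top]

lemma growthSite_injOn (hn : 1 ≤ n) : Set.InjOn (growthSite n) (Set.Iic (n * (n + 1))) := by
  intro k hk l hl he
  simp only [Set.mem_Iic] at hk hl
  have hk' := Nat.div_add_mod k n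
  have hl' := Nat.div_add_mod l n
  rcases hk.lt_or_eq with hk | rfl <;> rcases hl.lt_or_eq with hl | rfl
  · rw [(growthSite_of_lt hk).1, (growthSite_of_lt hl).1, Prod.mk.injEq] at he
    rw [← hk', ← hl', he.1, he.2]
  · rw [(growthSite_of_lt hk).1, growthSite_top, Prod.mk.injEq] at he
    exact absurd he.2 (Nat.mod_lt _ (by omega)).ne
  · rw [(growthSite_of_lt hl).1, growthSite_top, Prod.mk.injEq] at he
    exact absurd he.2.symm (Nat.mod_lt _ (by omega)).ne
  · rfl

lemma place_zero (a : Site L) : place a (0, 0) = a := by simp [place]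

lemma place_place (a : Site L) (p q : ℕ × ℕ) :
    place (place a p) q = place a (p.1 + q.1, p.2 + q.2) := by
  simp only [place, Nat.cast_add, Prod.mk.injEq]; constructor <;> ring

lemma place_inj [NeZero L] {a : Site L} {p q : ℕ × ℕ} (hp : p.1 < L ∧ p.2 < L)
    (hq : q.1 < L ∧ q.2 < L) (he : place a p = place a q) : p = q := by
  simp only [place, Prod.mk.injEq, add_right_inj] at he
  have h1 := congrArg ZMod.val he.1
  have h2 := congrArg ZMod.val he.2
  rw [ZMod.val_cast_of_lt hp.1, ZMod.val_cast_of_lt hq.1] at h1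
  rw [ZMod.val_cast_of_lt hp.2, ZMod.val_cast_of_lt hq.2] at h2
  exact Prod.ext h1 h2

lemma place_growthSite_injOn [NeZero L] (hL : n < L) (hn : 1 ≤ n) (a : Site L) :
    Set.InjOn (fun k => place a (growthSite n k)) (Set.Iic (n * (n + 1))) := by
  intro k hk l hl he
  have bk := growthSite_le (Set.mem_Iic.mp hk)
  have bl := growthSite_le (Set.mem_Iic.mp hl)
  exact growthSite_injOn hn hk hl (place_inj (by omega) (by omega) he)

lemma place_succ_snd_sub (a : Site L) (c j : ℕ) :
    place a (c, j + 1) - (0, 1) = place a (c, j) := by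
  simp only [place, Nat.cast_add, Nat.cast_one, Prod.mk_sub_mk, sub_zero, Prod.mk.injEq]
  exact ⟨trivial, by ring⟩

lemma place_succ_fst_sub (a : Site L) (c j : ℕ) :
    place a (c + 1, j) - (1, 0) = place a (c, j) := by
  simp only [place, Nat.cast_add, Nat.cast_one, Prod.mk_sub_mk, sub_zero, Prod.mk.injEq]
  exact ⟨by ring, trivial⟩

variable (a : Site L)

lemma growthPath_zero : growthPath a n 0 = cminus L := rfl

lemma growthDroplet_succ (i : ℕ) :
    growthDroplet a n (i + 1) = insert (place a (growthSite n i)) (growthDroplet a n i) := by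
  rw [growthDroplet, range_add_one, image_insert, growthDroplet]

lemma place_growthSite_mem {k i : ℕ} (hki : k < i) :
    place a (growthSite n k) ∈ growthDroplet a n i :=
  mem_image_of_mem _ (mem_range.mpr hki)

variable [NeZero L]

lemma place_growthSite_not_mem (hL : n < L) (hn : 1 ≤ n) {i : ℕ} (hi : i ≤ n * (n + 1)) :
    place a (growthSite n i) ∉ growthDroplet a n i := by
  simp only [growthDroplet, mem_image, mem_range, not_exists, not_and]
  intro k hk he
  have := place_growthSite_injOn hL hn a (Set.mem_Iic.mpr (by omega)) (Set.mem_Iic.mpr hi) he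
  omega

lemma card_growthDroplet (hL : n < L) (hn : 1 ≤ n) {i : ℕ} (hi : i ≤ n * (n + 1) + 1) :
    (growthDroplet a n i).card = i := by
  rw [growthDroplet, card_image_of_injOn, card_range]
  exact (place_growthSite_injOn hL hn a).mono fun k hk => by
    simp only [coe_range, Set.mem_Iio] at hk; simp only [Set.mem_Iic]; omega

end Growth

section GrowthEnergy

variable {L n : ℕ} [NeZero L] (a : Site L)

/-- `n ≤ k` says that the left neighbour of the new site is occupied, `0 < k % n` the lower
one. -/
lemma ham_growthPath_succ_le (hL : n < L) (hL1 : 1 < L) (hn : 1 ≤ n) (h : ℝ) {k : ℕ}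
    (hk : k < n * (n + 1)) :
    ham L h (growthPath a n (k + 1)) ≤ ham L h (growthPath a n k) + 4 - h
      - 2 * ((if n ≤ k then 1 else 0) + (if 0 < k % n then 1 else 0)) := by
  obtain ⟨hs, hc, hj⟩ := growthSite_of_lt hk
  have hdec := Nat.div_add_mod' k n
  have hleft : n ≤ k → place a (growthSite n k) - (1, 0) ∈ growthDroplet a n k := by
    intro hnk
    have := Nat.div_pos hnk (by omega)
    obtain ⟨c, hc'⟩ : ∃ c, k / n = c + 1 := ⟨k / n - 1, by omega⟩
    have : (c + 1) * n = c * n + n := by ring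
    rw [hs, hc', place_succ_fst_sub, ← growthSite_mul_add (by omega) hj]
    exact place_growthSite_mem a (by rw [hc'] at hdec; omega)
  have hbelow : 0 < k % n → place a (growthSite n k) - (0, 1) ∈ growthDroplet a n k := by
    intro hj0
    obtain ⟨j, hj'⟩ : ∃ j, k % n = j + 1 := ⟨k % n - 1, by omega⟩
    rw [hs, hj', place_succ_snd_sub, ← growthSite_mul_add hc (by omega)]
    exact place_growthSite_mem a (by omega)
  rw [growthPath, growthPath, growthDroplet_succ]
  refine (ham_zerosOn_insert_le hL1 h (place_growthSite_not_mem a hL hn hk.le)).trans ?_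
  split_ifs <;> first | linarith | tauto

lemma ham_growthPath_top_le (hL : n < L) (hL1 : 1 < L) (hn : 1 ≤ n) (h : ℝ) :
    ham L h (growthPath a n (n * (n + 1) + 1))
      ≤ ham L h (growthPath a n (n * (n + 1))) + 2 - h := by
  have hbelow : place a (0, n) - (0, 1) ∈ growthDroplet a n (n * (n + 1)) := by
    have e : place a (0, n) - (0, 1) = place a (growthSite n (0 * n + (n - 1))) := by
      rw [growthSite_mul_add (by omega) (by omega)]
      simpa [Nat.sub_add_cancel hn] using place_succ_snd_sub a 0 (n - 1)
    rw [e]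
    exact place_growthSite_mem a (by
      have : n ≤ n * (n + 1) := Nat.le_mul_of_pos_right n (by omega)
      omega)
  have := ham_zerosOn_insert_le hL1 h (place_growthSite_not_mem a hL hn le_rfl)
  rw [growthSite_top, if_pos hbelow] at this
  rw [growthPath, growthPath, growthDroplet_succ, growthSite_top]
  split_ifs at this <;> linarith

/-- Up to `h L²`, the bound is the perimeter of the droplet minus `h` times its area: the first
column grows the perimeter by `2` per site, each later column by `2` in total. -/
lemma ham_growthPath_succ_le_perimeter (hL : n < L) (hL1 : 1 < L) (hn : 1 ≤ n) (h : ℝ) {i : ℕ}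
    (hi : i < n * (n + 1)) :
    ham L h (growthPath a n (i + 1))
      ≤ h * L ^ 2 + 2 * ((min (i + 1) n : ℕ) + (i / n : ℕ) + 1) - h * (i + 1) := by
  induction i with
  | zero =>
    have := ham_growthPath_succ_le a hL hL1 hn h hi
    rw [growthPath_zero a, ham_cminus] at this
    simp only [Nat.zero_mod, lt_self_iff_false, if_false, Nat.zero_div, zero_add] at this ⊢
    rw [if_neg (by omega)] at this
    rw [Nat.min_eq_left hn]
    push_cast; linarith
  | succ i ih =>
    have ih := ih (by omega)
    have step := ham_growthPath_succ_le a hL hL1 hn h hi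
    have hdiv := Nat.succ_div (a := i) (b := n)
    by_cases hd : n ∣ i + 1
    · have h1 : n ≤ i + 1 := Nat.le_of_dvd (by omega) hd
      rw [if_pos hd] at hdiv
      rw [if_pos h1, if_neg (by rw [Nat.mod_eq_zero_of_dvd hd]; omega)] at step
      rw [hdiv, Nat.min_eq_right (by omega : n ≤ i + 1 + 1)]
      rw [Nat.min_eq_right h1] at ih
      push_cast at ih step ⊢; linarith
    · have h1 : 0 < (i + 1) % n := Nat.pos_of_ne_zero fun h0 => hd (Nat.dvd_of_mod_eq_zero h0)
      rw [if_neg hd, add_zero] at hdiv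
      rw [if_pos h1] at step
      rw [hdiv]
      split_ifs at step with h2
      · rw [Nat.min_eq_right (by omega : n ≤ i + 1 + 1)]
        rw [Nat.min_eq_right h2] at ih
        push_cast at ih step ⊢; linarith
      · rw [Nat.min_eq_left (by omega : i + 1 + 1 ≤ n)]
        rw [Nat.min_eq_left (by omega : i + 1 ≤ n)] at ih
        push_cast at ih step ⊢; linarith

lemma ham_growthPath_le (hL : n < L) (hL1 : 1 < L) (hn : 1 ≤ n) {h : ℝ} (h0 : 0 ≤ h)
    (hhn : h * n ≤ 2) {i : ℕ} (hi : i ≤ n * (n + 1) + 1) :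
    ham L h (growthPath a n i) ≤ h * L ^ 2 + 4 * (n + 1) - h * (n * (n + 1) + 1) := by
  have hnR : (1 : ℝ) ≤ n := by exact_mod_cast hn
  have hsq : h * n ^ 2 ≤ 2 * n := by nlinarith
  rcases Nat.eq_zero_or_pos i with rfl | hi0
  · rw [growthPath_zero a, ham_cminus]
    nlinarith
  obtain ⟨j, rfl⟩ : ∃ j, i = j + 1 := ⟨i - 1, by omega⟩
  rcases Nat.lt_or_ge j (n * (n + 1)) with hj | hj
  · have hb := ham_growthPath_succ_le_perimeter a hL hL1 hn h hj
    have hc : ((j / n : ℕ) : ℝ) ≤ n := by exact_mod_cast (growthSite_of_lt hj).2.1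
    have hcj : ((j / n : ℕ) : ℝ) * n ≤ j := by exact_mod_cast Nat.div_mul_le_self j n
    have key : 0 ≤ ((n : ℝ) + 1 - (j / n : ℕ)) * (2 - h * n) :=
      mul_nonneg (by linarith) (by linarith)
    push_cast at hb ⊢
    nlinarith [mul_le_mul_of_nonneg_left hcj h0, min_le_right ((j : ℝ) + 1) n]
  · obtain rfl : j = n * (n + 1) := by omega
    obtain ⟨m, hm⟩ : ∃ m, m + 1 = n * (n + 1) :=
      ⟨_, Nat.succ_pred_eq_of_pos (by positivity)⟩
    have top := ham_growthPath_top_le a hL hL1 hn h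
    have hb := ham_growthPath_succ_le_perimeter a hL hL1 hn h (i := m) (by omega)
    have hc : ((m / n : ℕ) : ℝ) ≤ n := by
      exact_mod_cast (growthSite_of_lt (by omega : m < n * (n + 1))).2.1
    have hmR : (m : ℝ) + 1 = n * (n + 1) := by exact_mod_cast hm
    rw [hm] at hb
    push_cast at hb ⊢
    rw [hmR] at hb
    nlinarith [min_le_right ((n : ℝ) * (n + 1)) n]

end GrowthEnergy

section GrowthPathProperties

variable {L n : ℕ}

lemma growthDroplet_rect (a : Site L) :
    growthDroplet a n (n * (n + 1)) = rect L a (n + 1) n := by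
  have hsites : (range (n * (n + 1))).image (growthSite n) = range (n + 1) ×ˢ range n := by
    ext ⟨c, j⟩
    simp only [mem_image, mem_range, mem_product]
    constructor
    · rintro ⟨k, hk, he⟩
      obtain ⟨hs, hc, hj⟩ := growthSite_of_lt hk
      rw [hs, Prod.mk.injEq] at he
      omega
    · rintro ⟨hc, hj⟩
      exact ⟨c * n + j, by nlinarith, growthSite_mul_add (by omega) hj⟩
  rw [rect, ← hsites, image_image]
  rfl

variable [NeZero L]

lemma growthPath_mem_setRa (hL : n < L) (hn : 1 ≤ n) (a : Site L) :
    growthPath a n (n * (n + 1) + 1) ∈ setRa L n := by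
  have hz := place_growthSite_not_mem a hL hn le_rfl
  rw [growthSite_top, growthDroplet_rect] at hz
  have hD : growthDroplet a n (n * (n + 1) + 1) = insert (place a (0, n)) (rect L a (n + 1) n) := by
    rw [growthDroplet_succ, growthSite_top, growthDroplet_rect]
  refine ⟨rect L a (n + 1) n, place a (0, n), ⟨a, Or.inr rfl⟩, hz, ?_, ?_, ?_, ?_⟩
  · rw [growthPath, Asites_zerosOn, hD]
  · intro x hx
    simp [growthPath, zerosOn, hD, hx]
  · simp [growthPath, zerosOn, hD]
  · refine ⟨place a (0, n - 1), ?_, ?_⟩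
    · rw [rect]
      exact mem_image_of_mem _ (mem_product.mpr ⟨by simp, by simp; omega⟩)
    · right; right; right
      simpa [Nat.sub_add_cancel hn] using (place_succ_snd_sub a 0 (n - 1)).symm

lemma growthPath_mem_valleyM (hL : n < L) (hn : 1 ≤ n) (a : Site L) {i : ℕ}
    (hi : i ≤ n * (n + 1) + 1) : growthPath a n i ∈ valleyM L n := by
  rcases hi.lt_or_eq with hi | rfl
  · left
    show (Asites L (zerosOn _)).card ≤ _
    rw [Asites_zerosOn, card_growthDroplet a hL hn hi.le]
    omega
  · obtain ⟨S, z, hS, hz, hA, h1, -⟩ := growthPath_mem_setRa hL hn a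
    exact Or.inr ⟨S, z, hS, hz, hA, h1⟩

lemma oneDiff_growthPath_succ (hL : n < L) (hn : 1 ≤ n) (a : Site L) {i : ℕ}
    (hi : i ≤ n * (n + 1)) : oneDiff L (growthPath a n i) (growthPath a n (i + 1)) := by
  rw [growthPath, growthPath, growthDroplet_succ]
  exact oneDiff_zerosOn_insert (place_growthSite_not_mem a hL hn hi)

/-- A nonempty droplet determines its anchor: each anchor lies in the other's droplet, which
only leaves offsets summing to `0` mod `L`. -/
lemma growthPath_inj (hL : 2 * n < L) (hn : 1 ≤ n) {a a' : Site L} {i i' : ℕ} (hi0 : 1 ≤ i)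
    (hi : i ≤ n * (n + 1) + 1) (hi' : i' ≤ n * (n + 1) + 1)
    (he : growthPath a n i = growthPath a' n i') : a = a' ∧ i = i' := by
  have hD : growthDroplet a n i = growthDroplet a' n i' := by
    rw [← Asites_zerosOn (growthDroplet a n i), ← Asites_zerosOn (growthDroplet a' n i')]
    exact congrArg (Asites L) he
  have hii' : i = i' := by
    rw [← card_growthDroplet a (by omega) hn hi, hD, card_growthDroplet a' (by omega) hn hi']
  subst hii'
  have anchor_mem : ∀ b : Site L, b ∈ growthDroplet b n i := fun b => by
    simpa [growthSite, show 0 < n * (n + 1) by positivity, place_zero]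
      using place_growthSite_mem b (n := n) hi0
  have offset : ∀ {b b' : Site L}, b ∈ growthDroplet b' n i →
      ∃ p : ℕ × ℕ, p.1 ≤ n ∧ p.2 ≤ n ∧ b = place b' p := fun hb => by
    obtain ⟨k, hk, rfl⟩ := mem_image.mp hb
    have hb := growthSite_le (n := n) (by simp at hk; omega : k ≤ n * (n + 1))
    exact ⟨_, hb.1, hb.2, rfl⟩
  obtain ⟨p, hp1, hp2, rfl⟩ := offset (show a ∈ growthDroplet a' n i from hD ▸ anchor_mem a)
  obtain ⟨q, hq1, hq2, hq⟩ :=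
    offset (show a' ∈ growthDroplet (place a' p) n i from hD ▸ anchor_mem a')
  have := place_inj (a := a') (p := (0, 0)) (q := (p.1 + q.1, p.2 + q.2)) (by simp; omega)
    (by simp; omega) (by rw [place_zero, ← place_place]; exact hq)
  simp only [Prod.mk.injEq] at this
  have hp : p = (0, 0) := Prod.ext (by omega) (by omega)
  exact ⟨by rw [hp, place_zero], rfl⟩

lemma growthPath_edge_injOn (hL : 2 * n < L) (hn : 1 ≤ n) :
    Set.InjOn (fun q : Site L × ℕ => (growthPath q.1 n q.2, growthPath q.1 n (q.2 + 1)))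
      (univ ×ˢ range (n * (n + 1) + 1) : Finset (Site L × ℕ)) := by
  rintro ⟨a, i⟩ hi ⟨a', i'⟩ hi' he
  simp only [coe_product, coe_univ, coe_range, Set.mem_prod, Set.mem_univ, Set.mem_Iio,
    true_and] at hi hi'
  obtain ⟨rfl, hii'⟩ := growthPath_inj hL hn le_add_self (by omega) (by omega)
    (congrArg Prod.snd he)
  exact Prod.ext rfl (Nat.add_right_cancel hii')

end GrowthPathProperties

end BC

theorem stmt_6_general (h : ℝ) (h0 : 0 < h) (h2 : h < 2) :
    ∃ C0 : ℝ, 0 < C0 ∧ ∀ β : ℝ, C0 ≤ β → ∀ (L : ℕ) [NeZero L],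
      2 * (BC.n0 h + 2) ≤ L →
      ∀ f : BC.Cfg L → ℝ, (∀ σ, 0 ≤ f σ ∧ f σ ≤ 1) →
        (∀ σ ∈ BC.setRa L (BC.n0 h), f σ = 1) → f (BC.cminus L) = 0 →
        (L : ℝ) ^ 2 * Real.exp (-β * BC.GammaC L h) / C0
          ≤ BC.dirV L h β (BC.valleyM L (BC.n0 h)) f := by
  open BC in
  set n := n0 h
  have hn : 1 ≤ n := Nat.le_floor (by rw [Nat.cast_one, le_div_iff₀ h0]; linarith)
  have hhn : h * n ≤ 2 := by
    have : (n : ℝ) ≤ 2 / h := Nat.floor_le (by positivity)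
    rw [le_div_iff₀ h0] at this; linarith
  set K := n * (n + 1) + 1
  refine ⟨2 * K, by positivity, fun β hβ L _ hL f _ hfRa hfm => ?_⟩
  have hΓ : GammaC L h = h * L ^ 2 + 4 * (n + 1) - h * (n * (n + 1) + 1) := by
    rw [GammaC]; push_cast; ring
  have hgw : ∀ (a : Site L), ∀ i ≤ K,
      Real.exp (-β * GammaC L h) ≤ gw L h β (growthPath a n i) :=
    fun a i hi => Real.exp_le_exp.mpr <| by
      have := ham_growthPath_le a (by omega) (by omega) hn h0.le hhn hi
      nlinarith [show (0 : ℝ) ≤ β by linarith [show (0 : ℝ) < 2 * K by positivity]]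
  have hpaths := card_mul_le_dirV_of_paths (V := valleyM L n) (K := K) (growthPath · n)
    (Real.exp_pos _).le (fun a i hi => growthPath_mem_valleyM (by omega) hn a hi)
    (fun a i hi => oneDiff_growthPath_succ (by omega) hn a (by omega)) hgw (growthPath_edge_injOn (by omega) hn) (fun _ => hfm)
    (fun a => hfRa _ (growthPath_mem_setRa (by omega) hn a))
  rw [Fintype.card_prod, ZMod.card] at hpaths
  rw [div_le_iff₀ (by positivity)]
  push_cast at hpaths
  linarith

/-- Lemma (ml4) : lower bound on the Dirichlet form of any admissible function for the
capacity `Cap_V(Rᵃ, {-1})` of the chain reflected in the valley of `-1`. -/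
theorem stmt_6 (h : ℝ) (h0 : 0 < h) (h2 : h < 2)
    (hirr : ∀ m : ℤ, (2 : ℝ) / h ≠ (m : ℝ)) :
    ∃ C0 : ℝ, 0 < C0 ∧ ∀ β : ℝ, C0 ≤ β → ∀ (L : ℕ) [NeZero L],
      2 * (BC.n0 h + 2) ≤ L →
      ∀ f : BC.Cfg L → ℝ, (∀ σ, 0 ≤ f σ ∧ f σ ≤ 1) →
        (∀ σ ∈ BC.setRa L (BC.n0 h), f σ = 1) → f (BC.cminus L) = 0 →
        (L : ℝ) ^ 2 * Real.exp (-β * BC.GammaC L h) / C0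
          ≤ BC.dirV L h β (BC.valleyM L (BC.n0 h)) f :=
  stmt_6_general h h0 h2
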